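/- arXiv:2109.13932 — 7 statements merged into one kernel-verified Lean document; each statement's English description precedes it below -/
import Mathlib

section
/- Let μ ∈ ℂ with Re(μ) ≥ 0 and let α < 1. Then for all sufficiently small ε > 0, both roots of the quadratic λ² + (μ + 1 + ε - α)λ + ε(μ + 2 - α) = 0 have strictly negative real part. -/
/-!
If `λ` is a root, then `w = λ + ε` satisfies `w² + (μ + 1 - α - ε) w + ε = 0`. For `ε < 1 - α`
the linear coefficient `β` has positive real part, and then every root `w` of `w² + β w + ε`
with `ε > 0` has `Re w < 0`: taking the real part of the equation multiplied by `conj w` gives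
`Re w · (|w|² + ε) = -Re β · |w|² < 0`. Hence `Re λ < -ε < 0`.
-/

open Complex

theorem re_neg_of_sq_add_mul_add_ofReal_eq_zero {β w : ℂ} {ε : ℝ} (hβ : 0 < β.re) (hε : 0 < ε)
    (hw : w ^ 2 + β * w + ε = 0) : w.re < 0 := by
  have hre := congrArg re hw
  have him := congrArg im hw
  simp only [pow_two, add_re, add_im, mul_re, mul_im, ofReal_re, ofReal_im, zero_re,
    zero_im] at hre him
  have hw0 : w ≠ 0 := by
    rintro rfl
    simp only [zero_re, zero_im, mul_zero, sub_zero, zero_add] at hre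
    linarith
  have key : w.re * (normSq w + ε) = -(β.re * normSq w) := by
    rw [normSq_apply]
    linear_combination w.re * hre + w.im * him
  have : 0 < β.re * normSq w := mul_pos hβ (normSq_pos.mpr hw0)
  nlinarith [normSq_nonneg w]

/-- Spectral core of Theorem 1: if `Re μ ≥ 0` and `α < 1`, then for all
sufficiently small `ε > 0` both roots of
`λ² + (μ + 1 + ε - α)λ + ε(μ + 2 - α) = 0` have strictly negative real part. -/
theorem stmt_6 (μ : ℂ) (hμ : 0 ≤ μ.re) (α : ℝ) (hα : α < 1) :
    ∃ ε₀ > 0, ∀ ε : ℝ, 0 < ε → ε < ε₀ →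
      ∀ lam : ℂ,
        lam ^ 2 + (μ + 1 + (ε : ℂ) - (α : ℂ)) * lam + (ε : ℂ) * (μ + 2 - (α : ℂ)) = 0 →
        lam.re < 0 := by
  refine ⟨1 - α, sub_pos.mpr hα, fun ε hε hεα lam hlam => ?_⟩
  have hshift : (lam + ε) ^ 2 + (μ + 1 - α - ε) * (lam + ε) + ε = 0 := by
    linear_combination hlam
  have hβ : 0 < (μ + 1 - α - ε).re := by
    simp only [sub_re, add_re, one_re, ofReal_re]
    linarith
  have hw_re := re_neg_of_sq_add_mul_add_ofReal_eq_zero hβ hε hshift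
  simp only [add_re, ofReal_re] at hw_re
  linarith
end

section
/- Let A be a non-negative N×N matrix with zero diagonal, α < 1, ε > 0 sufficiently small, and D⁻ the diagonal matrix of row sums of A. Then the origin of the linear system ẋ = ((α-1)I - D⁻ + A)x - y, ẏ = ε(x - y) is exponentially stable, i.e., all eigenvalues of the corresponding 2N×2N matrix have negative real part. -/
/-!
If `Re λ ≥ 0`, the bottom-right block `-(ε + λ) I` of the shifted matrix is invertible, and its
Schur complement shows that `μ = λ + ε / (ε + λ) - (α - 1)` is an eigenvalue of the negative graph
Laplacian `L = A - D⁻`. By Gershgorin's theorem every eigenvalue of `L` has `Re μ ≤ 0`, whereas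
`Re (ε / (ε + λ)) ≥ 0` forces `Re μ ≥ 1 - α > 0`. The argument works for every `ε > 0`.
-/

open Matrix Complex

theorem Complex.re_ofReal_div_nonneg {r : ℝ} (hr : 0 ≤ r) {z : ℂ} (hz : 0 ≤ z.re) :
    0 ≤ ((r : ℂ) / z).re := by
  rw [div_re, ofReal_re, ofReal_im, zero_mul, zero_div, add_zero]
  exact div_nonneg (mul_nonneg hr hz) (normSq_nonneg z)

namespace Matrix

variable {n : Type*} [Fintype n] [DecidableEq n]

theorem hasEigenvalue_toLin'_of_det_sub_smul_one_eq_zero {K : Type*} [Field K]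
    {M : Matrix n n K} {μ : K} (h : (M - μ • 1).det = 0) :
    Module.End.HasEigenvalue (toLin' M) μ := by
  rw [Module.End.hasEigenvalue_iff_mem_spectrum, spectrum_toLin', spectrum.mem_iff,
    Algebra.algebraMap_eq_smul_one, isUnit_iff_isUnit_det, ← neg_sub, det_neg, h, mul_zero]
  exact not_isUnit_zero

theorem det_fromBlocks_smul_one {K : Type*} [Field K] (P : Matrix n n K) (b c d : K)
    (hd : d ≠ 0) :
    (fromBlocks P (b • 1 : Matrix n n K) (c • 1) (d • 1)).det =
      d ^ Fintype.card n * (P - (b * c / d) • 1).det := by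
  let _ : Invertible (d • 1 : Matrix n n K) :=
    ⟨d⁻¹ • 1, by simp [smul_smul, hd], by simp [smul_smul, hd]⟩
  have hinv : ⅟(d • 1 : Matrix n n K) = d⁻¹ • 1 := rfl
  rw [det_fromBlocks₂₂, det_smul, det_one, mul_one, hinv]
  simp only [Matrix.smul_mul, Matrix.mul_smul, Matrix.one_mul, smul_smul]
  congr 4
  ring

theorem re_le_zero_of_hasEigenvalue_of_diagDominant {M : Matrix n n ℂ}
    (hM : ∀ k, (M k k).re + ∑ j ∈ Finset.univ.erase k, ‖M k j‖ ≤ 0) {μ : ℂ}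
    (hμ : Module.End.HasEigenvalue (toLin' M) μ) : μ.re ≤ 0 := by
  obtain ⟨k, hk⟩ := eigenvalue_mem_ball hμ
  rw [Metric.mem_closedBall, dist_eq_norm] at hk
  have := (re_le_norm (μ - M k k)).trans hk
  rw [sub_re] at this
  linarith [hM k]

theorem re_le_zero_of_hasEigenvalue_sub_diagonal_rowSum {A : Matrix n n ℝ}
    (hA : ∀ i j, 0 ≤ A i j) {μ : ℂ}
    (hμ : Module.End.HasEigenvalue
      (toLin' (A.map ofReal - (diagonal fun i => ∑ j, A i j).map ofReal)) μ) :
    μ.re ≤ 0 := by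
  refine re_le_zero_of_hasEigenvalue_of_diagDominant (fun k => ?_) hμ
  have hoff : ∀ j ∈ Finset.univ.erase k,
      ‖(A.map ofReal - (diagonal fun i => ∑ j, A i j).map ofReal) k j‖ = A k j := by
    intro j hj
    simp [diagonal_apply_ne _ (Finset.ne_of_mem_erase hj).symm, abs_of_nonneg (hA k j)]
  rw [Finset.sum_congr rfl hoff, Finset.sum_erase_eq_sub (Finset.mem_univ k)]
  simp

end Matrix

theorem stmt_7_general (N : ℕ) (A : Matrix (Fin N) (Fin N) ℝ)
    (hA : ∀ i j, 0 ≤ A i j)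
    (α : ℝ) (hα : α < 1) :
    ∃ ε₀ > 0, ∀ ε : ℝ, 0 < ε → ε < ε₀ →
      ∀ lam : ℂ,
        ((Matrix.fromBlocks
            (((α : ℂ) - 1) • (1 : Matrix (Fin N) (Fin N) ℂ)
              - (Matrix.diagonal (fun i => ∑ j, A i j)).map Complex.ofReal
              + A.map Complex.ofReal)
            (-(1 : Matrix (Fin N) (Fin N) ℂ))
            ((ε : ℂ) • (1 : Matrix (Fin N) (Fin N) ℂ))
            (-((ε : ℂ) • (1 : Matrix (Fin N) (Fin N) ℂ)))
          - lam • (1 : Matrix ((Fin N) ⊕ (Fin N)) ((Fin N) ⊕ (Fin N)) ℂ)).det = 0) →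
        lam.re < 0 := by
  refine ⟨1, one_pos, fun ε hε _ lam hdet => ?_⟩
  by_contra! hlam
  set L := A.map ofReal - (diagonal fun i => ∑ j, A i j).map ofReal
  have hshift : 0 < ((ε : ℂ) + lam).re := by rw [add_re, ofReal_re]; linarith
  have hshift0 : -((ε : ℂ) + lam) ≠ 0 := neg_ne_zero.2 fun h => by simp [h] at hshift
  set μ := lam + ε / (ε + lam) - (α - 1)
  rw [← fromBlocks_one, fromBlocks_smul, sub_eq_add_neg, fromBlocks_neg, fromBlocks_add] at hdet
  simp only [smul_zero, neg_zero, add_zero] at hdet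
  rw [show (-1 : Matrix (Fin N) (Fin N) ℂ) = (-1 : ℂ) • 1 by simp,
    show -((ε : ℂ) • 1) + -(lam • 1) = -((ε : ℂ) + lam) • (1 : Matrix (Fin N) (Fin N) ℂ) by
      module,
    det_fromBlocks_smul_one _ _ _ _ hshift0] at hdet
  have hμ : (L - μ • 1).det = 0 := by
    rw [← (mul_eq_zero.1 hdet).resolve_left (pow_ne_zero _ hshift0), neg_one_mul, neg_div_neg_eq]
    congr 1
    simp only [L, μ]
    module
  have hμre := re_le_zero_of_hasEigenvalue_sub_diagonal_rowSum hA
    (hasEigenvalue_toLin'_of_det_sub_smul_one_eq_zero hμ)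
  have hdamp := re_ofReal_div_nonneg hε.le hshift.le
  simp only [μ, sub_re, add_re, ofReal_re, one_re] at hμre
  linarith

/-- Theorem 1: the origin of the diffusively coupled network of damped
oscillators is locally exponentially stable for sufficiently small `ε > 0`:
all eigenvalues of `[[(α-1)I - D⁻ + A, -I],[εI, -εI]]` have negative real part. -/
theorem stmt_7 (N : ℕ) (A : Matrix (Fin N) (Fin N) ℝ)
    (hA : ∀ i j, 0 ≤ A i j) (hdiag : ∀ i, A i i = 0)
    (α : ℝ) (hα : α < 1) :
    ∃ ε₀ > 0, ∀ ε : ℝ, 0 < ε → ε < ε₀ →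
      ∀ lam : ℂ,
        ((Matrix.fromBlocks
            (((α : ℂ) - 1) • (1 : Matrix (Fin N) (Fin N) ℂ)
              - (Matrix.diagonal (fun i => ∑ j, A i j)).map Complex.ofReal
              + A.map Complex.ofReal)
            (-(1 : Matrix (Fin N) (Fin N) ℂ))
            ((ε : ℂ) • (1 : Matrix (Fin N) (Fin N) ℂ))
            (-((ε : ℂ) • (1 : Matrix (Fin N) (Fin N) ℂ)))
          - lam • (1 : Matrix ((Fin N) ⊕ (Fin N)) ((Fin N) ⊕ (Fin N)) ℂ)).det = 0) →
        lam.re < 0 :=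
  stmt_7_general N A hA α hα
end

section
/- Let μ ∈ ℂ with Re(μ) < ρ and |μ| ≤ ρ, where ρ = 1 + ε - α with α ∈ [0,1). Then for sufficiently small ε > 0, both roots of λ² + (1 + ε - α - μ)λ + (2 - α - μ)ε = 0 have strictly negative real part. -/
open Complex

/-!
The quadratic factors as `(λ + ε) (λ + ν) + ε` with `ν = 1 - α - μ`. If `Re μ ≤ 1 - α` and
`Re λ ≥ 0`, then `λ + ν = -ε / (λ + ε)` would have negative real part while `Re (λ + ν) ≥ Re λ ≥ 0`.
If instead `Re μ > 1 - α`, then `‖μ‖ ≥ Re μ > 1 + ε - α` for small `ε`, so there is nothing to prove.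
-/

theorem Complex.re_neg_of_mul_eq_neg_ofReal {z w : ℂ} {r : ℝ} (hr : 0 < r) (hz : 0 < z.re)
    (h : z * w = -r) : w.re < 0 := by
  have hz0 : z ≠ 0 := fun h0 => by simp [h0] at hz
  have hw : w = -r / z := by rw [← h]; field_simp
  rw [hw, div_re]
  simp only [neg_re, ofReal_re, neg_im, ofReal_im, neg_zero, zero_mul, zero_div, add_zero]
  have : 0 < normSq z := normSq_pos.mpr hz0
  rw [neg_mul, neg_div]
  exact neg_neg_of_pos (div_pos (mul_pos hr hz) this)

theorem re_neg_of_add_mul_add_eq_neg {lam ν : ℂ} {ε : ℝ} (hε : 0 < ε) (hν : 0 ≤ ν.re)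
    (h : (lam + ε) * (lam + ν) = -ε) : lam.re < 0 := by
  by_contra! hlam
  have hpos : 0 < (lam + ε).re := by simp only [add_re, ofReal_re]; linarith
  have hneg := Complex.re_neg_of_mul_eq_neg_ofReal hε hpos h
  rw [add_re] at hneg
  linarith

theorem stmt_11_general (μ : ℂ) (α : ℝ) :
    ∃ ε₀ > 0, ∀ ε : ℝ, 0 < ε → ε < ε₀ →
      μ.re < 1 + ε - α → ‖μ‖ ≤ 1 + ε - α →
      ∀ lam : ℂ,
        lam ^ 2 + (1 + (ε : ℂ) - (α : ℂ) - μ) * lam + (2 - (α : ℂ) - μ) * (ε : ℂ) = 0 →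
        lam.re < 0 := by
  rcases le_or_gt μ.re (1 - α) with hμ | hμ
  · refine ⟨1, one_pos, fun ε hε _ _ _ lam hlam => ?_⟩
    have hν : 0 ≤ (1 - α - μ).re := by simp only [sub_re, one_re, ofReal_re, sub_nonneg]; linarith
    refine re_neg_of_add_mul_add_eq_neg hε hν ?_
    linear_combination hlam
  · refine ⟨μ.re - (1 - α), by linarith, fun ε _ hε_small _ hnorm _ _ => ?_⟩
    linarith [re_le_norm μ]

/-- Stability of non-dominant modes at the excitatory Hopf bifurcation:
if `μ ∈ ℂ` satisfies `Re μ < ρ` and `|μ| ≤ ρ` where `ρ = 1 + ε - α`,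
`α ∈ [0,1)`, then for sufficiently small `ε > 0` both roots of
`λ² + (1+ε-α-μ)λ + (2-α-μ)ε = 0` have strictly negative real part. -/
theorem stmt_11 (μ : ℂ) (α : ℝ) (hα0 : 0 ≤ α) (hα1 : α < 1) :
    ∃ ε₀ > 0, ∀ ε : ℝ, 0 < ε → ε < ε₀ →
      μ.re < 1 + ε - α → ‖μ‖ ≤ 1 + ε - α →
      ∀ lam : ℂ,
        lam ^ 2 + (1 + (ε : ℂ) - (α : ℂ) - μ) * lam + (2 - (α : ℂ) - μ) * (ε : ℂ) = 0 →
        lam.re < 0 :=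
  stmt_11_general μ α
end

section
/- Let A be an irreducible non-negative matrix with A𝟙 = d⁻𝟙, α ∈ [0,1), β = (1+ε-α)/d⁻, and ε > 0 sufficiently small. Then the 2N×2N Jacobian J = [[-(1-α)I + βA, -I],[εI, -εI]] has exactly two eigenvalues (counted with multiplicity) on the imaginary axis, namely ±i√(ε(1-ε)), and all remaining 2N-2 eigenvalues have strictly negative real part. -/
/-!
Every block of the Jacobian `J` is a polynomial in `M = -(1 - α) + β A`, so the characteristic
polynomial of `J` is `∏ ((X - ν) (X + ε) + ε)` over the eigenvalues `ν` of `M`: `λ` is an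
eigenvalue of `J` iff `λ + ε / (λ + ε)` is one of `M`. That map sends the closed right half-plane
into the open one, so an eigenvalue `ν` with `Re ν ≤ 0` only produces `λ` with `Re λ < 0`.

The eigenvalue `d` of `A` gives `ν = ε` and the factor `X ^ 2 + ε (1 - ε)`, whose roots are
`±i√(ε(1-ε))`. By Gershgorin every other eigenvalue `μ` of `A` has `|μ| ≤ d`, hence `Re μ < d`,
and then `Re ν ≤ 0` for small `ε`. That `d` is a simple eigenvalue is Perron–Frobenius:
irreducibility forces its eigenspace to be spanned by `𝟙`, and the maximum principle rules out
`A x = d x + 𝟙`, so there is no Jordan chain.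
-/

open Matrix Complex Polynomial

/-- An irreducible matrix (strong connectivity of the associated digraph). -/
def MatrixIsIrreducible {N : ℕ} (A : Matrix (Fin N) (Fin N) ℝ) : Prop :=
  ∀ i j, ∃ m : ℕ, 0 < m ∧ (A ^ m) i j ≠ 0

open Filter Topology

theorem Multiset.exists_eq_cons_of_count_eq_one {α : Type*} [DecidableEq α] {s : Multiset α}
    {a : α} (h : s.count a = 1) : ∃ t, s = a ::ₘ t ∧ a ∉ t := by
  obtain ⟨t, rfl⟩ := exists_cons_of_mem (count_pos.mp (h ▸ one_pos))
  refine ⟨t, rfl, fun ha => ?_⟩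
  rw [count_cons_self, add_eq_right] at h
  exact (count_pos.mpr ha).ne' h

theorem Module.End.maxGenEigenspace_eq_eigenspace {R M : Type*} [CommRing R] [AddCommGroup M]
    [Module R M] {f : Module.End R M} {μ : R}
    (h : ∀ x, f x - μ • x ∈ f.eigenspace μ → x ∈ f.eigenspace μ) :
    f.maxGenEigenspace μ = f.eigenspace μ := by
  suffices hk : ∀ (k : ℕ) x, ((f - μ • 1) ^ k) x = 0 → x ∈ f.eigenspace μ from
    le_antisymm (fun x hx => ((mem_maxGenEigenspace f μ x).mp hx).elim (hk · x))
      eigenspace_le_maxGenEigenspace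
  intro k
  induction k with
  | zero => simp
  | succ k ih =>
    intro x hx
    rw [pow_succ, Module.End.mul_apply] at hx
    simpa using h x (ih _ hx)

namespace Complex

theorem re_lt_of_norm_le_of_ne {μ : ℂ} {d : ℝ} (h : ‖μ‖ ≤ d) (hne : μ ≠ d) : μ.re < d := by
  by_contra! hre
  have hnorm : |μ.re| = ‖μ‖ :=
    le_antisymm (abs_re_le_norm μ) (h.trans (hre.trans (le_abs_self _)))
  exact hne (Complex.ext (le_antisymm ((re_le_norm μ).trans h) hre) (abs_re_eq_norm.mp hnorm))

theorem re_neg_of_mul_add_eq_zero {ε : ℝ} (hε : 0 < ε) {ν z : ℂ} (hν : ν.re ≤ 0)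
    (hz : (z - ν) * (z + ε) + ε = 0) : z.re < 0 := by
  have hre := congrArg re hz
  have him := congrArg im hz
  simp only [add_re, mul_re, sub_re, sub_im, add_im, mul_im, ofReal_re, ofReal_im, zero_re,
    zero_im] at hre him
  -- multiplying the equation by the conjugate of `z + ε` isolates `z - ν`
  have key : (z.re - ν.re) * ((z.re + ε) ^ 2 + z.im ^ 2) + ε * (z.re + ε) = 0 := by
    linear_combination (z.re + ε) * hre + z.im * him
  by_contra! hz0
  have : 0 ≤ (z.re - ν.re) * ((z.re + ε) ^ 2 + z.im ^ 2) := mul_nonneg (by linarith) (by positivity)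
  linarith [mul_pos hε (add_pos_of_nonneg_of_pos hz0 hε)]

end Complex

theorem roots_X_sub_C_mul_X_add_C_add_C {ε : ℝ} (hε : 0 ≤ ε) (hε1 : ε ≤ 1) :
    ((X - C (ε : ℂ)) * (X + C (ε : ℂ)) + C (ε : ℂ)).roots =
      {I * (Real.sqrt (ε * (1 - ε)) : ℂ), -(I * (Real.sqrt (ε * (1 - ε)) : ℂ))} := by
  set a : ℂ := I * (Real.sqrt (ε * (1 - ε)) : ℂ)
  have ha : C (a ^ 2) = C (-(ε * (1 - ε) : ℂ)) := by
    rw [mul_pow, I_sq, ← ofReal_pow, Real.sq_sqrt (by nlinarith)]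
    push_cast
    ring_nf
  have hfactor : (X - C (ε : ℂ)) * (X + C (ε : ℂ)) + C (ε : ℂ) = (X - C a) * (X - C (-a)) := by
    simp only [map_neg, map_pow, map_mul, map_sub, map_one] at ha ⊢
    linear_combination ha
  rw [hfactor, roots_mul (mul_ne_zero (X_sub_C_ne_zero a) (X_sub_C_ne_zero (-a))),
    roots_X_sub_C, roots_X_sub_C]
  rfl

namespace Matrix

variable {n : Type*} [Fintype n]

section Field

variable [DecidableEq n] {K : Type*} [Field K]

theorem det_fromBlocks_smul_one₂₂ (A B C : Matrix n n K) {s : K} (hs : s ≠ 0) :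
    (fromBlocks A B C (s • 1)).det = (s • A - B * C).det := by
  let : Invertible (s • (1 : Matrix n n K)) :=
    ⟨s⁻¹ • 1, by rw [smul_mul_smul_comm, inv_mul_cancel₀ hs, one_smul, one_mul],
      by rw [smul_mul_smul_comm, mul_inv_cancel₀ hs, one_smul, one_mul]⟩
  rw [det_fromBlocks₂₂, det_smul, det_one, mul_one, ← det_smul, smul_sub]
  congr 2
  change s • (B * (s⁻¹ • 1) * C) = B * C
  rw [Matrix.mul_smul, Matrix.mul_one, Matrix.smul_mul, smul_smul, mul_inv_cancel₀ hs, one_smul]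

variable [IsAlgClosed K]

theorem det_smul_one_sub_smul (B : Matrix n n K) (w c : K) :
    (w • (1 : Matrix n n K) - c • B).det = (B.charpoly.roots.map fun μ => w - c * μ).prod := by
  have hcard : Multiset.card B.charpoly.roots = Fintype.card n := by
    rw [IsAlgClosed.card_roots_eq_natDegree, charpoly_natDegree_eq_dim]
  rcases eq_or_ne c 0 with rfl | hc
  · simp [hcard]
  · have hfactor : w • (1 : Matrix n n K) - c • B = c • (scalar n (w / c) - B) := by
      rw [smul_sub, scalar_apply, ← smul_one_eq_diagonal, smul_smul, mul_div_cancel₀ _ hc]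
    rw [hfactor, det_smul, ← eval_charpoly,
      (IsAlgClosed.splits _).eq_prod_roots_of_monic B.charpoly_monic, eval_multiset_prod,
      Multiset.map_map, roots_multiset_prod_X_sub_C, ← hcard, ← Multiset.prod_replicate,
      ← Multiset.map_const', ← Multiset.prod_map_mul]
    congr 1
    refine Multiset.map_congr rfl fun μ _ => ?_
    simp only [Function.comp_apply, eval_sub, eval_X, eval_C]
    field_simp

theorem roots_charpoly_smul_one_add_smul (B : Matrix n n K) (c b : K) :
    (c • (1 : Matrix n n K) + b • B).charpoly.roots = B.charpoly.roots.map (c + b * ·) := by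
  have hprod : (c • (1 : Matrix n n K) + b • B).charpoly =
      ((B.charpoly.roots.map (c + b * ·)).map fun ν => X - C ν).prod := by
    refine Polynomial.funext fun z => ?_
    have : scalar n z - (c • 1 + b • B) = (z - c) • 1 - b • B := by
      rw [scalar_apply, ← smul_one_eq_diagonal]
      module
    rw [eval_charpoly, this, det_smul_one_sub_smul, eval_multiset_prod, Multiset.map_map,
      Multiset.map_map]
    congr 1
    refine Multiset.map_congr rfl fun μ _ => ?_
    simp only [Function.comp_apply, eval_sub, eval_X, eval_C]
    ring
  rw [hprod, roots_multiset_prod_X_sub_C]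

theorem charpoly_fromBlocks_neg_one (M : Matrix n n K) (ε : K) :
    (fromBlocks M (-(1 : Matrix n n K)) (ε • 1) (-(ε • 1))).charpoly =
      (M.charpoly.roots.map fun ν => (X - C ν) * (X + C ε) + C ε).prod := by
  refine eq_of_infinite_eval_eq _ _ <| (Set.finite_singleton (-ε)).infinite_compl.mono
    fun z hz => ?_
  have hzε : z + ε ≠ 0 := fun h => hz (eq_neg_of_add_eq_zero_left h)
  have hblock : scalar (n ⊕ n) z - fromBlocks M (-(1 : Matrix n n K)) (ε • 1) (-(ε • 1)) =
      fromBlocks (scalar n z - M) 1 (-(ε • 1)) ((z + ε) • 1) := by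
    ext (i | i) (j | j) <;> by_cases h : i = j <;> simp [h]
  have hschur : (z + ε) • (scalar n z - M) - 1 * -(ε • 1) =
      ((z + ε) * z + ε) • 1 - (z + ε) • M := by
    rw [scalar_apply, ← smul_one_eq_diagonal, Matrix.one_mul]
    module
  rw [Set.mem_ofPred_eq, eval_charpoly, hblock, det_fromBlocks_smul_one₂₂ _ _ _ hzε, hschur,
    det_smul_one_sub_smul, eval_multiset_prod, Multiset.map_map]
  congr 1
  refine Multiset.map_congr rfl fun ν _ => ?_
  simp only [Function.comp_apply, eval_add, eval_mul, eval_sub, eval_X, eval_C]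
  ring

theorem roots_charpoly_fromBlocks_neg_one (M : Matrix n n K) (ε : K) :
    (fromBlocks M (-(1 : Matrix n n K)) (ε • 1) (-(ε • 1))).charpoly.roots =
      M.charpoly.roots.bind fun ν => ((X - C ν) * (X + C ε) + C ε).roots := by
  rw [charpoly_fromBlocks_neg_one, roots_multiset_prod, Multiset.bind_map]
  simp only [Multiset.mem_map, not_exists, not_and]
  intro ν _ h
  have hmonic : ((X - C ν) * (X + C ε) + C ε).Monic :=
    ((monic_X_sub_C ν).mul (monic_X_add_C ε)).add_of_left <| by
      rw [degree_mul, degree_X_sub_C, degree_X_add_C]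
      exact degree_C_le.trans_lt (by norm_num)
  exact hmonic.ne_zero h

end Field

theorem exists_roots_charpoly_fromBlocks_neg_one_eq [DecidableEq n] (M : Matrix n n ℂ) {ε : ℝ}
    (hε : 0 < ε) (hε1 : ε ≤ 1) {S : Multiset ℂ} (hM : M.charpoly.roots = (ε : ℂ) ::ₘ S)
    (hS : ∀ ν ∈ S, ν.re ≤ 0) :
    ∃ T : Multiset ℂ,
      (fromBlocks M (-(1 : Matrix n n ℂ)) ((ε : ℂ) • 1) (-((ε : ℂ) • 1))).charpoly.roots =
        {I * (Real.sqrt (ε * (1 - ε)) : ℂ), -(I * (Real.sqrt (ε * (1 - ε)) : ℂ))} + T ∧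
      ∀ z ∈ T, z.re < 0 := by
  refine ⟨S.bind fun ν => ((X - C ν) * (X + C (ε : ℂ)) + C (ε : ℂ)).roots, ?_, ?_⟩
  · rw [roots_charpoly_fromBlocks_neg_one, hM, Multiset.cons_bind,
      roots_X_sub_C_mul_X_add_C_add_C hε.le hε1]
  · intro z hz
    obtain ⟨ν, hν, hzν⟩ := Multiset.mem_bind.mp hz
    exact re_neg_of_mul_add_eq_zero hε (hS ν hν) (by simpa using isRoot_of_mem_roots hzν)

variable {A : Matrix n n ℝ} {d : ℝ}

theorem pow_mulVec_eq_pow_smul [DecidableEq n] {R : Type*} [CommSemiring R] {B : Matrix n n R}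
    {t : R} {x : n → R} (h : B *ᵥ x = t • x) (m : ℕ) : (B ^ m) *ᵥ x = t ^ m • x := by
  induction m with
  | zero => simp
  | succ m ih => rw [pow_succ, ← mulVec_mulVec, h, mulVec_smul, ih, smul_smul, pow_succ']

theorem mulVec_one_of_sum_eq {R : Type*} [Semiring R] {B : Matrix n n R} {t : R}
    (hreg : ∀ i, ∑ j, B i j = t) : B *ᵥ 1 = t • 1 := by
  ext i
  simpa [mulVec, dotProduct] using hreg i

theorem exists_mulVec_apply_le [Nonempty n] (hA : ∀ i j, 0 ≤ A i j)
    (hreg : ∀ i, ∑ j, A i j = d) (x : n → ℝ) : ∃ i, (A *ᵥ x) i ≤ d * x i := by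
  obtain ⟨i, -, hi⟩ := Finset.exists_max_image Finset.univ x Finset.univ_nonempty
  refine ⟨i, ?_⟩
  calc (A *ᵥ x) i = ∑ j, A i j * x j := rfl
    _ ≤ ∑ j, A i j * x i :=
      Finset.sum_le_sum fun j _ => mul_le_mul_of_nonneg_left (hi j (Finset.mem_univ j)) (hA i j)
    _ = d * x i := by rw [← Finset.sum_mul, hreg i]

theorem mulVec_ne_smul_add_one [Nonempty n] (hA : ∀ i j, 0 ≤ A i j)
    (hreg : ∀ i, ∑ j, A i j = d) (x : n → ℝ) : A *ᵥ x ≠ d • x + 1 := by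
  intro h
  obtain ⟨i, hi⟩ := exists_mulVec_apply_le hA hreg x
  have := congrFun h i
  simp only [Pi.add_apply, Pi.smul_apply, smul_eq_mul, Pi.one_apply] at this
  linarith

theorem norm_le_of_mem_roots_charpoly_map_ofReal [DecidableEq n] (hA : ∀ i j, 0 ≤ A i j)
    (hreg : ∀ i, ∑ j, A i j = d) {μ : ℂ} (hμ : μ ∈ (A.map ofReal).charpoly.roots) : ‖μ‖ ≤ d := by
  have hev : Module.End.HasEigenvalue (toLin' (A.map ofReal)) μ := by
    rw [Module.End.hasEigenvalue_iff_isRoot_charpoly, charpoly_toLin']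
    exact isRoot_of_mem_roots hμ
  obtain ⟨k, hk⟩ := eigenvalue_mem_ball hev
  have hrow : ∑ j ∈ Finset.univ.erase k, ‖(A.map ofReal) k j‖ = d - A k k := by
    simp only [map_apply, norm_real, Real.norm_of_nonneg (hA _ _)]
    rw [← hreg k, ← Finset.add_sum_erase _ _ (Finset.mem_univ k), add_sub_cancel_left]
  rw [Metric.mem_closedBall, dist_eq_norm, hrow, map_apply] at hk
  calc ‖μ‖ ≤ ‖μ - A k k‖ + ‖(A k k : ℂ)‖ := norm_le_norm_sub_add _ _
    _ ≤ d := by rw [norm_real, Real.norm_of_nonneg (hA k k)]; linarith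

theorem re_mulVec_map_ofReal (A : Matrix n n ℝ) (v : n → ℂ) (i : n) :
    ((A.map ofReal *ᵥ v) i).re = (A *ᵥ fun j => (v j).re) i := by
  simp [mulVec, dotProduct, re_sum]

theorem im_mulVec_map_ofReal (A : Matrix n n ℝ) (v : n → ℂ) (i : n) :
    ((A.map ofReal *ᵥ v) i).im = (A *ᵥ fun j => (v j).im) i := by
  simp [mulVec, dotProduct, im_sum]

end Matrix

namespace MatrixIsIrreducible

variable {N : ℕ} {A : Matrix (Fin N) (Fin N) ℝ} {d : ℝ}

theorem eq_of_mulVec_eq_smul (hirr : MatrixIsIrreducible A) (hA : ∀ i j, 0 ≤ A i j)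
    (hreg : ∀ i, ∑ j, A i j = d) {x : Fin N → ℝ} (hx : A *ᵥ x = d • x) (i j : Fin N) :
    x i = x j := by
  obtain ⟨i₀, -, hi₀⟩ := Finset.exists_min_image Finset.univ x ⟨i, Finset.mem_univ i⟩
  set y := x - x i₀ • 1
  have hy : A *ᵥ y = d • y := by
    rw [mulVec_sub, mulVec_smul, hx, mulVec_one_of_sum_eq hreg, smul_comm, ← smul_sub]
  have hy_nonneg : ∀ k, 0 ≤ y k := fun k => by simpa [y] using hi₀ k (Finset.mem_univ k)
  -- `y` vanishes at `i₀`, hence at every index reachable from `i₀`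
  have hy_zero : ∀ k, y k = 0 := by
    intro k
    obtain ⟨m, -, hm⟩ := hirr i₀ k
    have hsum : ∑ l, (A ^ m) i₀ l * y l = 0 := by
      change ((A ^ m) *ᵥ y) i₀ = 0
      simp [pow_mulVec_eq_pow_smul hy, y]
    have hterm := (Finset.sum_eq_zero_iff_of_nonneg fun l _ =>
      mul_nonneg (pow_apply_nonneg hA m i₀ l) (hy_nonneg l)).mp hsum k (Finset.mem_univ k)
    exact (mul_eq_zero.mp hterm).resolve_left hm
  have hi := hy_zero i
  have hj := hy_zero j
  simp only [y, Pi.sub_apply, Pi.smul_apply, Pi.one_apply, smul_eq_mul, mul_one] at hi hj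
  linarith

theorem eigenspace_toLin'_map_ofReal [Nonempty (Fin N)] (hirr : MatrixIsIrreducible A)
    (hA : ∀ i j, 0 ≤ A i j) (hreg : ∀ i, ∑ j, A i j = d) :
    Module.End.eigenspace (toLin' (A.map ofReal)) (d : ℂ) = Submodule.span ℂ {1} := by
  ext v
  rw [Module.End.mem_eigenspace_iff, toLin'_apply, Submodule.mem_span_singleton]
  constructor
  · intro hv
    have hre : A *ᵥ (fun j => (v j).re) = d • fun j => (v j).re := by
      ext i
      simpa [← re_mulVec_map_ofReal] using congrArg re (congrFun hv i)
    have him : A *ᵥ (fun j => (v j).im) = d • fun j => (v j).im := by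
      ext i
      simpa [← im_mulVec_map_ofReal] using congrArg im (congrFun hv i)
    obtain ⟨i₀⟩ := ‹Nonempty (Fin N)›
    refine ⟨v i₀, funext fun i => Complex.ext ?_ ?_⟩
    · simpa using hirr.eq_of_mulVec_eq_smul hA hreg hre i₀ i
    · simpa using hirr.eq_of_mulVec_eq_smul hA hreg him i₀ i
  · rintro ⟨c, rfl⟩
    rw [mulVec_smul, mulVec_one_of_sum_eq (t := (d : ℂ)), smul_comm]
    intro i
    simp [← ofReal_sum, hreg i]

theorem rootMultiplicity_charpoly_map_ofReal [Nonempty (Fin N)] (hirr : MatrixIsIrreducible A)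
    (hA : ∀ i j, 0 ≤ A i j) (hreg : ∀ i, ∑ j, A i j = d) :
    (A.map ofReal).charpoly.rootMultiplicity (d : ℂ) = 1 := by
  have heig := hirr.eigenspace_toLin'_map_ofReal hA hreg
  rw [← charpoly_toLin', ← LinearMap.finrank_maxGenEigenspace_eq,
    Module.End.maxGenEigenspace_eq_eigenspace, heig, finrank_span_singleton one_ne_zero]
  intro v hv
  rw [heig, Submodule.mem_span_singleton, toLin'_apply] at hv
  obtain ⟨c, hc⟩ := hv
  rw [Module.End.mem_eigenspace_iff, toLin'_apply]
  rcases eq_or_ne c 0 with rfl | hc0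
  · rwa [zero_smul, eq_comm, sub_eq_zero] at hc
  · exfalso
    set w : Fin N → ℂ := c⁻¹ • v
    have hw : (A.map ofReal) *ᵥ w = (d : ℂ) • w + 1 := by
      have hv : (A.map ofReal) *ᵥ v = (d : ℂ) • v + c • 1 := by rw [hc]; abel
      rw [mulVec_smul, hv, smul_add, smul_comm, smul_smul c⁻¹ c, inv_mul_cancel₀ hc0, one_smul]
    refine mulVec_ne_smul_add_one hA hreg (fun j => (w j).re) (funext fun i => ?_)
    simpa [← re_mulVec_map_ofReal] using congrArg re (congrFun hw i)

theorem exists_roots_charpoly_map_ofReal_eq_cons [Nonempty (Fin N)]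
    (hirr : MatrixIsIrreducible A) (hA : ∀ i j, 0 ≤ A i j) (hreg : ∀ i, ∑ j, A i j = d) :
    ∃ R : Multiset ℂ, (A.map ofReal).charpoly.roots = (d : ℂ) ::ₘ R ∧ ∀ μ ∈ R, μ.re < d := by
  obtain ⟨R, hroots, hdR⟩ :=
    Multiset.exists_eq_cons_of_count_eq_one (s := (A.map ofReal).charpoly.roots) <| by
      rw [count_roots]
      exact hirr.rootMultiplicity_charpoly_map_ofReal hA hreg
  refine ⟨R, hroots, fun μ hμ => re_lt_of_norm_le_of_ne ?_ (ne_of_mem_of_not_mem hμ hdR)⟩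
  exact norm_le_of_mem_roots_charpoly_map_ofReal hA hreg (hroots ▸ Multiset.mem_cons_of_mem hμ)

end MatrixIsIrreducible

theorem exists_pos_forall_re_le_zero_of_re_lt {d α : ℝ} (hd : 0 < d) (hα1 : α < 1)
    {R : Multiset ℂ} (hR : ∀ μ ∈ R, μ.re < d) :
    ∃ ε₀ > 0, ∀ ε : ℝ, |ε| < ε₀ →
      ε < 1 ∧ ∀ μ ∈ R, (-(1 - α : ℂ) + (((1 + ε - α) / d : ℝ) : ℂ) * μ).re ≤ 0 := by
  have hμ_small : ∀ μ ∈ R.toFinset, ∀ᶠ ε in 𝓝 (0 : ℝ), (1 + ε - α) / d * μ.re < 1 - α := by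
    intro μ hμ
    have h0 : (1 + 0 - α) / d * μ.re < 1 - α := by
      rw [add_zero, div_mul_eq_mul_div, div_lt_iff₀ hd]
      exact mul_lt_mul_of_pos_left (hR μ (Multiset.mem_toFinset.mp hμ)) (sub_pos.mpr hα1)
    exact ContinuousAt.eventually_lt (g := fun _ => 1 - α) (by fun_prop) continuousAt_const h0
  obtain ⟨ε₀, hε₀, hsmall⟩ := Metric.eventually_nhds_iff.mp <|
    (eventually_lt_nhds one_pos).and ((eventually_all_finset _).mpr hμ_small)
  refine ⟨ε₀, hε₀, fun ε hε => ?_⟩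
  obtain ⟨hε1, hleft⟩ := hsmall (by rwa [Real.dist_0_eq_abs])
  refine ⟨hε1, fun μ hμ => ?_⟩
  have := hleft μ (Multiset.mem_toFinset.mpr hμ)
  simp only [add_re, neg_re, sub_re, one_re, ofReal_re, mul_re, ofReal_im, zero_mul, sub_zero]
  linarith

theorem stmt_13_general (N : ℕ) (hN : 0 < N) (A : Matrix (Fin N) (Fin N) ℝ)
    (hA : ∀ i j, 0 ≤ A i j) (hirr : MatrixIsIrreducible A)
    (d : ℝ) (hd : 0 < d) (hreg : ∀ i, ∑ j, A i j = d)
    (α : ℝ) (hα1 : α < 1) :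
    ∃ ε₀ > 0, ∀ ε : ℝ, 0 < ε → ε < ε₀ →
      (Multiset.card
        (((Matrix.fromBlocks
            (-((1 - (α : ℂ)) • (1 : Matrix (Fin N) (Fin N) ℂ))
              + (((1 + ε - α) / d : ℝ) : ℂ) • A.map Complex.ofReal)
            (-(1 : Matrix (Fin N) (Fin N) ℂ))
            ((ε : ℂ) • (1 : Matrix (Fin N) (Fin N) ℂ))
            (-((ε : ℂ) • (1 : Matrix (Fin N) (Fin N) ℂ)))).charpoly.roots).filter
          (fun z => z.re = 0)) = 2)
      ∧ Complex.I * (Real.sqrt (ε * (1 - ε)) : ℂ) ∈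
          ((Matrix.fromBlocks
            (-((1 - (α : ℂ)) • (1 : Matrix (Fin N) (Fin N) ℂ))
              + (((1 + ε - α) / d : ℝ) : ℂ) • A.map Complex.ofReal)
            (-(1 : Matrix (Fin N) (Fin N) ℂ))
            ((ε : ℂ) • (1 : Matrix (Fin N) (Fin N) ℂ))
            (-((ε : ℂ) • (1 : Matrix (Fin N) (Fin N) ℂ)))).charpoly.roots)
      ∧ -(Complex.I * (Real.sqrt (ε * (1 - ε)) : ℂ)) ∈
          ((Matrix.fromBlocks
            (-((1 - (α : ℂ)) • (1 : Matrix (Fin N) (Fin N) ℂ))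
              + (((1 + ε - α) / d : ℝ) : ℂ) • A.map Complex.ofReal)
            (-(1 : Matrix (Fin N) (Fin N) ℂ))
            ((ε : ℂ) • (1 : Matrix (Fin N) (Fin N) ℂ))
            (-((ε : ℂ) • (1 : Matrix (Fin N) (Fin N) ℂ)))).charpoly.roots)
      ∧ ∀ z ∈ ((Matrix.fromBlocks
            (-((1 - (α : ℂ)) • (1 : Matrix (Fin N) (Fin N) ℂ))
              + (((1 + ε - α) / d : ℝ) : ℂ) • A.map Complex.ofReal)
            (-(1 : Matrix (Fin N) (Fin N) ℂ))
            ((ε : ℂ) • (1 : Matrix (Fin N) (Fin N) ℂ))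
            (-((ε : ℂ) • (1 : Matrix (Fin N) (Fin N) ℂ)))).charpoly.roots),
          z.re ≠ 0 → z.re < 0 := by
  have : Nonempty (Fin N) := Fin.pos_iff_nonempty.mp hN
  obtain ⟨R, hroots, hgap⟩ := hirr.exists_roots_charpoly_map_ofReal_eq_cons hA hreg
  obtain ⟨ε₀, hε₀, hsmall⟩ := exists_pos_forall_re_le_zero_of_re_lt hd hα1 hgap
  refine ⟨ε₀, hε₀, fun ε hε hεε₀ => ?_⟩
  obtain ⟨hε1, hleft⟩ := hsmall ε (by rwa [abs_of_pos hε])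
  have hM : (-((1 - (α : ℂ)) • 1) + (((1 + ε - α) / d : ℝ) : ℂ) • A.map ofReal).charpoly.roots =
      (ε : ℂ) ::ₘ R.map fun μ => -(1 - α : ℂ) + (((1 + ε - α) / d : ℝ) : ℂ) * μ := by
    have hd' : (d : ℂ) ≠ 0 := ofReal_ne_zero.mpr hd.ne'
    rw [← neg_smul, roots_charpoly_smul_one_add_smul, hroots, Multiset.map_cons]
    congr 1
    push_cast
    field_simp
    ring
  obtain ⟨T, hJ, hT⟩ := exists_roots_charpoly_fromBlocks_neg_one_eq _ hε hε1.le hM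
    (Multiset.forall_mem_map_iff.mpr hleft)
  have hpair : ∀ z ∈ ({I * (Real.sqrt (ε * (1 - ε)) : ℂ), -(I * (Real.sqrt (ε * (1 - ε)) : ℂ))} :
      Multiset ℂ), z.re = 0 := by simp
  rw [hJ]
  refine ⟨?_, by simp, by simp, fun z hz hz0 => ?_⟩
  · rw [Multiset.filter_add, Multiset.filter_eq_self.mpr hpair,
      Multiset.filter_eq_nil.mpr fun z hz => (hT z hz).ne]
    simp
  · exact (Multiset.mem_add.mp hz).elim (fun h => absurd (hpair z h) hz0) (hT z)

/-- Theorem 2 (in-regular case), spectral picture: for `β = (1+ε-α)/d⁻` and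
sufficiently small `ε > 0`, the Jacobian has exactly two eigenvalues (with
multiplicity) on the imaginary axis, namely `±i√(ε(1-ε))`, and all other
`2N - 2` eigenvalues have strictly negative real part. -/
theorem stmt_13 (N : ℕ) (hN : 0 < N) (A : Matrix (Fin N) (Fin N) ℝ)
    (hA : ∀ i j, 0 ≤ A i j) (hdiag : ∀ i, A i i = 0) (hirr : MatrixIsIrreducible A)
    (d : ℝ) (hd : 0 < d) (hreg : ∀ i, ∑ j, A i j = d)
    (α : ℝ) (hα0 : 0 ≤ α) (hα1 : α < 1) :
    ∃ ε₀ > 0, ∀ ε : ℝ, 0 < ε → ε < ε₀ →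
      (Multiset.card
        (((Matrix.fromBlocks
            (-((1 - (α : ℂ)) • (1 : Matrix (Fin N) (Fin N) ℂ))
              + (((1 + ε - α) / d : ℝ) : ℂ) • A.map Complex.ofReal)
            (-(1 : Matrix (Fin N) (Fin N) ℂ))
            ((ε : ℂ) • (1 : Matrix (Fin N) (Fin N) ℂ))
            (-((ε : ℂ) • (1 : Matrix (Fin N) (Fin N) ℂ)))).charpoly.roots).filter
          (fun z => z.re = 0)) = 2)
      ∧ Complex.I * (Real.sqrt (ε * (1 - ε)) : ℂ) ∈
          ((Matrix.fromBlocks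
            (-((1 - (α : ℂ)) • (1 : Matrix (Fin N) (Fin N) ℂ))
              + (((1 + ε - α) / d : ℝ) : ℂ) • A.map Complex.ofReal)
            (-(1 : Matrix (Fin N) (Fin N) ℂ))
            ((ε : ℂ) • (1 : Matrix (Fin N) (Fin N) ℂ))
            (-((ε : ℂ) • (1 : Matrix (Fin N) (Fin N) ℂ)))).charpoly.roots)
      ∧ -(Complex.I * (Real.sqrt (ε * (1 - ε)) : ℂ)) ∈
          ((Matrix.fromBlocks
            (-((1 - (α : ℂ)) • (1 : Matrix (Fin N) (Fin N) ℂ))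
              + (((1 + ε - α) / d : ℝ) : ℂ) • A.map Complex.ofReal)
            (-(1 : Matrix (Fin N) (Fin N) ℂ))
            ((ε : ℂ) • (1 : Matrix (Fin N) (Fin N) ℂ))
            (-((ε : ℂ) • (1 : Matrix (Fin N) (Fin N) ℂ)))).charpoly.roots)
      ∧ ∀ z ∈ ((Matrix.fromBlocks
            (-((1 - (α : ℂ)) • (1 : Matrix (Fin N) (Fin N) ℂ))
              + (((1 + ε - α) / d : ℝ) : ℂ) • A.map Complex.ofReal)
            (-(1 : Matrix (Fin N) (Fin N) ℂ))
            ((ε : ℂ) • (1 : Matrix (Fin N) (Fin N) ℂ))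
            (-((ε : ℂ) • (1 : Matrix (Fin N) (Fin N) ℂ)))).charpoly.roots),
          z.re ≠ 0 → z.re < 0 :=
  stmt_13_general N hN A hA hirr d hd hreg α hα1
end

section
/- Let A be an irreducible non-negative N×N matrix with zero diagonal, ρ > 0 its Perron-Frobenius (spectral radius) eigenvalue, x₀ > 0 the associated Perron eigenvector, α ∈ [0,1), ε ∈ (0,1), and β = (1+ε-α)/ρ. Then J = [[-(1-α)I + βA, -I],[εI, -εI]] has purely imaginary eigenvalues ±i√(ε(1-ε)) with eigenvectors (x₀, (ε ∓ i√(ε(1-ε)))x₀). -/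
open Matrix Complex

/-!
An eigenvector `x` of `A` with eigenvalue `ρ` spans, together with a second copy of itself, a
`J`-invariant plane on which `J` acts by the `2 × 2` matrix `[[-(1-α) + βρ, -1], [ε, -ε]]`.
The choice `βρ = 1 + ε - α` makes its trace vanish, so its eigenvalues are `±√(-det)` with
`det = ε - ε² > 0`, i.e. `±i√(ε(1-ε))`.
-/

namespace Matrix

variable {n R : Type*} [Fintype n] [CommRing R]

theorem fromBlocks_mulVec_sum_elim_eq_smul [DecidableEq n] (B : Matrix n n R) (x : n → R) {μ a b e c : R}
    (hx : B *ᵥ x = μ • x) (hb : b * μ = a + e) (hc : c * c = e * e - e) :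
    fromBlocks (-(a • 1) + b • B) (-1) (e • 1) (-(e • 1)) *ᵥ Sum.elim x ((e - c) • x)
      = c • Sum.elim x ((e - c) • x) := by
  rw [fromBlocks_mulVec]
  ext (i | i)
  · simp only [Sum.elim_comp_inl, Sum.elim_comp_inr, add_mulVec, neg_mulVec, smul_mulVec,
      one_mulVec, hx, Sum.elim_inl, Pi.add_apply, Pi.neg_apply, Pi.smul_apply, smul_eq_mul]
    linear_combination x i * hb
  · simp only [Sum.elim_comp_inl, Sum.elim_comp_inr, neg_mulVec, smul_mulVec, one_mulVec,
      Sum.elim_inr, Pi.add_apply, Pi.neg_apply, Pi.smul_apply, smul_eq_mul]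
    linear_combination x i * hc

theorem map_ofReal_mulVec_eq_smul {A : Matrix n n ℝ} {x : n → ℝ} {ρ : ℝ}
    (h : A *ᵥ x = ρ • x) :
    A.map ofReal *ᵥ (fun i => (x i : ℂ)) = (ρ : ℂ) • fun i => (x i : ℂ) := by
  ext i
  refine (RingHom.map_mulVec ofRealHom A x i).symm.trans ?_
  simp [h]

end Matrix

namespace Complex

theorem I_mul_sqrt_mul_self {s : ℝ} (hs : 0 ≤ s) :
    (I * Real.sqrt s) * (I * Real.sqrt s) = -s := by
  rw [mul_mul_mul_comm, I_mul_I, ← ofReal_mul, Real.mul_self_sqrt hs, neg_one_mul]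

theorem I_mul_sqrt_ne_zero {s : ℝ} (hs : 0 < s) : I * Real.sqrt s ≠ 0 :=
  mul_ne_zero I_ne_zero (ofReal_ne_zero.mpr (Real.sqrt_pos.mpr hs).ne')

end Complex

theorem stmt_15_general (N : ℕ) (A : Matrix (Fin N) (Fin N) ℝ)
    (ρ : ℝ) (hρ : 0 < ρ)
    (x₀ : Fin N → ℝ) (hPerron : A.mulVec x₀ = ρ • x₀)
    (α ε β : ℝ) (hε : 0 < ε) (hε1 : ε < 1)
    (hβ : β = (1 + ε - α) / ρ) :
    let ω : ℂ := Complex.I * (Real.sqrt (ε * (1 - ε)) : ℂ)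
    let J : Matrix ((Fin N) ⊕ (Fin N)) ((Fin N) ⊕ (Fin N)) ℂ :=
      Matrix.fromBlocks
        (-((1 - (α : ℂ)) • (1 : Matrix (Fin N) (Fin N) ℂ)) + (β : ℂ) • A.map Complex.ofReal)
        (-(1 : Matrix (Fin N) (Fin N) ℂ))
        ((ε : ℂ) • (1 : Matrix (Fin N) (Fin N) ℂ))
        (-((ε : ℂ) • (1 : Matrix (Fin N) (Fin N) ℂ)))
    J.mulVec (Sum.elim (fun i => ((x₀ i : ℂ))) (fun i => ((ε : ℂ) - ω) * (x₀ i : ℂ)))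
      = ω • (Sum.elim (fun i => ((x₀ i : ℂ))) (fun i => ((ε : ℂ) - ω) * (x₀ i : ℂ)))
    ∧ J.mulVec (Sum.elim (fun i => ((x₀ i : ℂ))) (fun i => ((ε : ℂ) + ω) * (x₀ i : ℂ)))
      = (-ω) • (Sum.elim (fun i => ((x₀ i : ℂ))) (fun i => ((ε : ℂ) + ω) * (x₀ i : ℂ)))
    ∧ ω.re = 0 ∧ ω ≠ 0 := by
  intro ω J
  have hs : 0 < ε * (1 - ε) := mul_pos hε (by linarith)
  have hω : ω * ω = ε * ε - ε := by
    rw [I_mul_sqrt_mul_self hs.le]; push_cast; ring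
  have hβρ : (β : ℂ) * ρ = (1 - α) + ε := by
    rw [← ofReal_mul, hβ, div_mul_cancel₀ _ hρ.ne']; push_cast; ring
  have hAx := map_ofReal_mulVec_eq_smul hPerron
  refine ⟨fromBlocks_mulVec_sum_elim_eq_smul _ _ hAx hβρ hω, ?_, by simp [ω],
    I_mul_sqrt_ne_zero hs⟩
  have h := fromBlocks_mulVec_sum_elim_eq_smul _ _ hAx hβρ (c := -ω) (by rw [neg_mul_neg, hω])
  rwa [sub_neg_eq_add] at h

/-- Theorem 3, eigenstructure: with `ρ` the Perron eigenvalue of the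
irreducible non-negative matrix `A`, `x₀ > 0` the Perron eigenvector, and
`β = (1+ε-α)/ρ`, the Jacobian `J = [[-(1-α)I + βA, -I],[εI, -εI]]` has purely
imaginary eigenvalues `±i√(ε(1-ε))` with eigenvectors `(x₀, (ε ∓ i√(ε(1-ε)))x₀)`. -/
theorem stmt_15 (N : ℕ) (hN : 0 < N) (A : Matrix (Fin N) (Fin N) ℝ)
    (hA : ∀ i j, 0 ≤ A i j) (hdiag : ∀ i, A i i = 0) (hirr : MatrixIsIrreducible A)
    (ρ : ℝ) (hρ : 0 < ρ) (hspec : ∀ μ : ℂ, (A.map Complex.ofReal - μ • 1).det = 0 →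
      ‖μ‖ ≤ ρ)
    (x₀ : Fin N → ℝ) (hx₀ : ∀ i, 0 < x₀ i) (hPerron : A.mulVec x₀ = ρ • x₀)
    (α ε β : ℝ) (hα0 : 0 ≤ α) (hα1 : α < 1) (hε : 0 < ε) (hε1 : ε < 1)
    (hβ : β = (1 + ε - α) / ρ) :
    let ω : ℂ := Complex.I * (Real.sqrt (ε * (1 - ε)) : ℂ)
    let J : Matrix ((Fin N) ⊕ (Fin N)) ((Fin N) ⊕ (Fin N)) ℂ :=
      Matrix.fromBlocks
        (-((1 - (α : ℂ)) • (1 : Matrix (Fin N) (Fin N) ℂ)) + (β : ℂ) • A.map Complex.ofReal)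
        (-(1 : Matrix (Fin N) (Fin N) ℂ))
        ((ε : ℂ) • (1 : Matrix (Fin N) (Fin N) ℂ))
        (-((ε : ℂ) • (1 : Matrix (Fin N) (Fin N) ℂ)))
    J.mulVec (Sum.elim (fun i => ((x₀ i : ℂ))) (fun i => ((ε : ℂ) - ω) * (x₀ i : ℂ)))
      = ω • (Sum.elim (fun i => ((x₀ i : ℂ))) (fun i => ((ε : ℂ) - ω) * (x₀ i : ℂ)))
    ∧ J.mulVec (Sum.elim (fun i => ((x₀ i : ℂ))) (fun i => ((ε : ℂ) + ω) * (x₀ i : ℂ)))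
      = (-ω) • (Sum.elim (fun i => ((x₀ i : ℂ))) (fun i => ((ε : ℂ) + ω) * (x₀ i : ℂ)))
    ∧ ω.re = 0 ∧ ω ≠ 0 :=
  stmt_15_general N A ρ hρ x₀ hPerron α ε β hε hε1 hβ
end

section
/- Let A be irreducible non-negative with Perron eigenvalue ρ and Perron eigenvector x₀ > 0, α ∈ [0,1), β = (1+ε-α)/ρ, and ε > 0 sufficiently small. Then the subspace E = {(r x₀, (εr + √(ε(1-ε))s) x₀) : r, s ∈ ℝ} ⊂ ℝ^{2N} is invariant under J = [[-(1-α)I + βA, -I],[εI, -εI]], J restricted to E has spectrum {±i√(ε(1-ε))}, and all eigenvalues of J not associated with E have strictly negative real part. -/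
open Matrix Complex

/-! On `E` the Jacobian only sees `A x₀ = ρ x₀`, and acts there as the rotation
`(r, s) ↦ (-ω s, ω r)`. Off `E`, a Schur complement with respect to the commuting lower blocks
turns every eigenvalue `λ ≠ -ε` of `J` into the eigenvalue `μ = (λ + ε/(λ+ε) + 1 - α)/β` of `A`.
If `Re λ ≥ 0` then `Re (λ + ε/(λ+ε)) > 0`, so `Re μ > (1-α)/β`. For `μ = ρ` the relation reads
`λ² = ε² - ε`, i.e. `λ = ±iω`. Every other eigenvalue has `Re μ < ρ` because `|μ| ≤ ρ`; there
are finitely many of them and `(1-α)/β → ρ` as `ε → 0`, so `Re μ < (1-α)/β` once `ε` is small. -/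

open Filter Topology

namespace Matrix

variable {n : Type*} [Fintype n] [DecidableEq n] {K : Type*} [Field K]

theorem mem_spectrum_iff_det_sub_smul_eq_zero (A : Matrix n n K) (μ : K) :
    μ ∈ spectrum K A ↔ (A - μ • 1).det = 0 := by
  rw [spectrum.mem_iff, Algebra.algebraMap_eq_smul_one, ← neg_sub, IsUnit.neg_iff,
    isUnit_iff_isUnit_det, isUnit_iff_ne_zero, not_not]

theorem det_fromBlocks_neg_one_smul_one (P : Matrix n n K) (c k : K) (hk : k ≠ 0) :
    (fromBlocks P (-1 : Matrix n n K) (c • 1) (k • 1)).det =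
      k ^ Fintype.card n * (P + (c / k) • 1).det := by
  let : Invertible (k • (1 : Matrix n n K)) := ⟨k⁻¹ • 1, by simp [hk], by simp [hk]⟩
  rw [det_fromBlocks₂₂, det_smul, det_one, mul_one]
  congr 2
  change P - -1 * (k⁻¹ • 1) * (c • 1) = P + (c / k) • 1
  simp [smul_smul, div_eq_mul_inv]

end Matrix

open scoped ComplexOrder in
theorem Complex.re_lt_of_norm_le_of_ne_s16 {z : ℂ} {r : ℝ} (hz : ‖z‖ ≤ r) (hne : z ≠ r) : z.re < r := by
  refine (re_le_norm z).trans hz |>.lt_of_ne fun h => hne ?_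
  have hnonneg : 0 ≤ z := re_eq_norm.1 (le_antisymm (re_le_norm z) (h ▸ hz))
  exact Complex.ext (by simp [h]) (by simp [(nonneg_iff.1 hnonneg).2])

theorem Complex.re_add_div_add_pos {z : ℂ} {ε : ℝ} (hz : 0 ≤ z.re) (hε : 0 < ε) :
    0 < (z + ε / (z + ε)).re := by
  have hpos : 0 < (z + ε).re := by simp only [add_re, ofReal_re]; linarith
  have hne : z + ε ≠ 0 := fun h => by simp [h] at hpos
  rw [add_re, div_eq_mul_inv, re_ofReal_mul, inv_re]
  exact add_pos_of_nonneg_of_pos hz (mul_pos hε (div_pos hpos (normSq_pos.2 hne)))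

theorem Complex.eq_I_mul_or_of_add_div_add_eq {z : ℂ} {ε ω : ℝ} (hz : z + ε ≠ 0)
    (hω : ω ^ 2 = ε * (1 - ε)) (h : z + ε / (z + ε) = ε) : z = I * ω ∨ z = -(I * ω) := by
  have hωC : (ω : ℂ) ^ 2 = ε * (1 - ε) := by exact_mod_cast hω
  have hquad : z * (z + ε) + ε = ε * (z + ε) := by
    field_simp at h
    linear_combination h
  have hfactor : (z - I * ω) * (z + I * ω) = 0 := by
    linear_combination hquad + hωC - (ω : ℂ) ^ 2 * I_sq
  rcases mul_eq_zero.1 hfactor with h | h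
  · exact Or.inl (by linear_combination h)
  · exact Or.inr (by linear_combination h)

theorem Complex.eventually_forall_re_lt_of_norm_le {S : Set ℂ} (hS : S.Finite) {ρ : ℝ}
    (hρ : ∀ μ ∈ S, ‖μ‖ ≤ ρ) {ι : Type*} {l : Filter ι} {f : ι → ℝ} (hf : Tendsto f l (𝓝 ρ)) :
    ∀ᶠ t in l, ∀ μ ∈ S, μ ≠ ρ → μ.re < f t := by
  refine (eventually_all_finite hS).2 fun μ hμ => ?_
  by_cases hμρ : μ = ρ
  · exact Eventually.of_forall fun _ h => absurd hμρ h
  · exact (hf.eventually_const_lt (re_lt_of_norm_le_of_ne_s16 (hρ μ hμ) hμρ)).mono fun _ h _ => h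

namespace ExcitatoryNetwork

variable {n R : Type*} [CommRing R]

def centerVec (x : n → R) (ε ω r s : R) : n ⊕ n → R :=
  Sum.elim (r • x) ((ε * r + ω * s) • x)

theorem centerVec_smul (x : n → R) (ε ω c r s : R) :
    c • centerVec x ε ω r s = centerVec x ε ω (c * r) (c * s) := by
  ext (i | i) <;> simp only [centerVec, Pi.smul_apply, Sum.elim_inl, Sum.elim_inr, smul_eq_mul] <;>
    ring

variable [DecidableEq n]

def jacobian (A : Matrix n n R) (α β ε : R) : Matrix (n ⊕ n) (n ⊕ n) R :=
  fromBlocks (-((1 - α) • 1) + β • A) (-1) (ε • 1) (-(ε • 1))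

theorem jacobian_map {S : Type*} [CommRing S] (f : R →+* S) (A : Matrix n n R) (α β ε : R) :
    (jacobian A α β ε).map f = jacobian (A.map f) (f α) (f β) (f ε) := by
  simp [jacobian, fromBlocks_map, Matrix.map_add, Matrix.map_neg, map_smul' _ _ _ (map_mul f),
    Matrix.map_one _ (map_zero f) (map_one f)]

theorem jacobian_mulVec_centerVec [Fintype n] {A : Matrix n n R} {x : n → R}
    {ρ α β ε ω : R} (hx : A *ᵥ x = ρ • x) (hβρ : β * ρ = 1 + ε - α)
    (hω : ω ^ 2 = ε * (1 - ε)) (r s : R) :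
    jacobian A α β ε *ᵥ centerVec x ε ω r s = centerVec x ε ω (-(ω * s)) (ω * r) := by
  ext (i | i) <;>
    simp only [jacobian, centerVec, fromBlocks_mulVec, Sum.elim_comp_inl, Sum.elim_comp_inr,
      Sum.elim_inl, Sum.elim_inr, mulVec_smul, add_mulVec, neg_mulVec, smul_mulVec, one_mulVec, hx,
      smul_add, smul_neg, Pi.add_apply, Pi.neg_apply, Pi.smul_apply, smul_eq_mul, neg_smul, mul_neg]
  · linear_combination r * x i * hβρ
  · linear_combination -(r * x i) * hω

theorem jacobian_sub_smul_one {K : Type*} [Field K] (A : Matrix n n K) (α β ε μ : K) :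
    jacobian A α β ε - μ • 1 =
      fromBlocks (β • A - (1 - α + μ) • 1) (-1) (ε • 1) ((-(μ + ε)) • 1) := by
  rw [jacobian, ← fromBlocks_one, fromBlocks_smul, sub_eq_add_neg, fromBlocks_neg, fromBlocks_add]
  congr 1 <;> module

theorem mem_spectrum_of_mem_spectrum_jacobian {K : Type*} [Field K] [Fintype n]
    {A : Matrix n n K} {α β ε μ : K} (hβ : β ≠ 0) (hμ : μ + ε ≠ 0)
    (h : μ ∈ spectrum K (jacobian A α β ε)) :
    (μ + ε / (μ + ε) + (1 - α)) / β ∈ spectrum K A := by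
  rw [mem_spectrum_iff_det_sub_smul_eq_zero, jacobian_sub_smul_one,
    det_fromBlocks_neg_one_smul_one _ _ _ (neg_ne_zero.2 hμ)] at h
  have hschur : β • A - (1 - α + μ) • 1 + (ε / -(μ + ε)) • 1 =
      β • (A - ((μ + ε / (μ + ε) + (1 - α)) / β) • 1) := by
    rw [smul_sub, smul_smul, mul_div_cancel₀ _ hβ, div_neg]
    module
  rw [hschur, det_smul, mul_eq_zero, mul_eq_zero] at h
  rw [mem_spectrum_iff_det_sub_smul_eq_zero]
  exact (h.resolve_left (pow_ne_zero _ (neg_ne_zero.2 hμ))).resolve_left (pow_ne_zero _ hβ)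

theorem re_neg_of_mem_spectrum_jacobian [Fintype n] {A : Matrix n n ℂ} {ρ α β ε ω : ℝ}
    (hβ : 0 < β) (hε : 0 < ε) (hβρ : β * ρ = 1 + ε - α) (hω : ω ^ 2 = ε * (1 - ε))
    (hgap : ∀ μ ∈ spectrum ℂ A, μ ≠ ρ → μ.re < (1 - α) / β) {z : ℂ}
    (hz : z ∈ spectrum ℂ (jacobian A α β ε)) (h₁ : z ≠ I * ω) (h₂ : z ≠ -(I * ω)) :
    z.re < 0 := by
  by_contra! hre
  have hzε : z + ε ≠ 0 := fun h => by
    have := congrArg re h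
    simp only [add_re, ofReal_re, zero_re] at this
    linarith
  have hβC : (β : ℂ) ≠ 0 := ofReal_ne_zero.2 hβ.ne'
  have hμ := mem_spectrum_of_mem_spectrum_jacobian hβC hzε hz
  by_cases hμρ : (z + ε / (z + ε) + (1 - α)) / β = ρ
  · have hβρC : (β : ℂ) * ρ = 1 + ε - α := by exact_mod_cast hβρ
    rw [div_eq_iff hβC] at hμρ
    rcases eq_I_mul_or_of_add_div_add_eq hzε hω (by linear_combination hμρ + hβρC) with h | h
    exacts [h₁ h, h₂ h]
  · have hlt := hgap _ hμ hμρ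
    have hpos := re_add_div_add_pos hre hε
    rw [div_ofReal_re, (div_lt_div_iff_of_pos_right hβ)] at hlt
    simp only [add_re, sub_re, one_re, ofReal_re] at hlt hpos
    linarith

end ExcitatoryNetwork

open ExcitatoryNetwork

theorem stmt_16_general (N : ℕ) (A : Matrix (Fin N) (Fin N) ℝ)
    (ρ : ℝ) (hρ : 0 < ρ) (hspec : ∀ μ : ℂ, (A.map Complex.ofReal - μ • 1).det = 0 →
      ‖μ‖ ≤ ρ)
    (x₀ : Fin N → ℝ) (hPerron : A.mulVec x₀ = ρ • x₀)
    (α : ℝ) (hα1 : α < 1) :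
    ∃ ε₀ > 0, ∀ ε : ℝ, 0 < ε → ε < ε₀ →
      let ω : ℝ := Real.sqrt (ε * (1 - ε))
      let β : ℝ := (1 + ε - α) / ρ
      let J : Matrix ((Fin N) ⊕ (Fin N)) ((Fin N) ⊕ (Fin N)) ℝ :=
        Matrix.fromBlocks (-((1 - α) • (1 : Matrix (Fin N) (Fin N) ℝ)) + β • A)
          (-(1 : Matrix (Fin N) (Fin N) ℝ))
          (ε • (1 : Matrix (Fin N) (Fin N) ℝ)) (-(ε • (1 : Matrix (Fin N) (Fin N) ℝ)))
      let e : ℝ → ℝ → ((Fin N) ⊕ (Fin N)) → ℝ := fun r s =>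
        Sum.elim (fun i => r * x₀ i) (fun i => (ε * r + ω * s) * x₀ i)
      (∀ r s : ℝ, ∃ r' s' : ℝ, J.mulVec (e r s) = e r' s')
      ∧ J.mulVec (e 1 0) = ω • (e 0 1)
      ∧ J.mulVec (e 0 1) = -(ω • (e 1 0))
      ∧ ∀ lam : ℂ,
          ((J.map Complex.ofReal)
            - lam • (1 : Matrix ((Fin N) ⊕ (Fin N)) ((Fin N) ⊕ (Fin N)) ℂ)).det = 0 →
          lam ≠ Complex.I * (ω : ℂ) → lam ≠ -(Complex.I * (ω : ℂ)) →
          lam.re < 0 := by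
  have hnorm : ∀ μ ∈ spectrum ℂ (A.map ofReal), ‖μ‖ ≤ ρ :=
    fun μ hμ => hspec μ ((mem_spectrum_iff_det_sub_smul_eq_zero _ _).1 hμ)
  have hlim : Tendsto (fun ε : ℝ => (1 - α) / ((1 + ε - α) / ρ)) (𝓝[>] 0) (𝓝 ρ) := by
    have hcont : ContinuousAt (fun ε : ℝ => (1 - α) / ((1 + ε - α) / ρ)) 0 := by
      fun_prop (disch := simp [sub_eq_zero, hα1.ne', hρ.ne'])
    convert hcont.tendsto.mono_left nhdsWithin_le_nhds using 2
    field_simp [sub_ne_zero.2 hα1.ne']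
    ring
  obtain ⟨ε₀, hε₀, hsmall⟩ := (nhdsGT_basis (0 : ℝ)).eventually_iff.1
    ((eventually_forall_re_lt_of_norm_le (finite_spectrum _) hnorm hlim).and
      (eventually_nhdsWithin_of_eventually_nhds (eventually_lt_nhds one_pos)))
  refine ⟨ε₀, hε₀, fun ε hε hεε₀ => ?_⟩
  obtain ⟨hgap, hε1⟩ := hsmall ⟨hε, hεε₀⟩
  intro ω β J e
  have hω : ω ^ 2 = ε * (1 - ε) := Real.sq_sqrt (by nlinarith)
  have hβρ : β * ρ = 1 + ε - α := div_mul_cancel₀ _ hρ.ne'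
  have hJe : ∀ r s, J *ᵥ e r s = e (-(ω * s)) (ω * r) := jacobian_mulVec_centerVec hPerron hβρ hω
  have hJC : J.map ofReal = jacobian (A.map ofReal) α β ε := jacobian_map ofRealHom A α β ε
  refine ⟨fun r s => ⟨_, _, hJe r s⟩, ?_, ?_, fun z hz h₁ h₂ => ?_⟩
  · rw [hJe]
    show centerVec x₀ ε ω _ _ = ω • centerVec x₀ ε ω 0 1
    rw [centerVec_smul]
    congr 1; ring
  · rw [hJe]
    show centerVec x₀ ε ω _ _ = -(ω • centerVec x₀ ε ω 1 0)
    rw [← neg_smul, centerVec_smul]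
    congr 1 <;> ring
  · rw [hJC, ← mem_spectrum_iff_det_sub_smul_eq_zero] at hz
    exact re_neg_of_mem_spectrum_jacobian (div_pos (by linarith) hρ) hε hβρ hω hgap hz h₁ h₂

/-- Theorem 3, center subspace and stability: with `β = (1+ε-α)/ρ` and `ε > 0`
sufficiently small, `E = {(r x₀, (εr + √(ε(1-ε))s) x₀)}` is invariant under
`J = [[-(1-α)I + βA, -I],[εI, -εI]]`, `J|E` has spectrum `{±i√(ε(1-ε))}`
(encoded by `J u = ω v`, `J v = -ω u`), and all eigenvalues of `J` other than
`±i√(ε(1-ε))` have strictly negative real part. -/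
theorem stmt_16 (N : ℕ) (hN : 0 < N) (A : Matrix (Fin N) (Fin N) ℝ)
    (hA : ∀ i j, 0 ≤ A i j) (hdiag : ∀ i, A i i = 0) (hirr : MatrixIsIrreducible A)
    (ρ : ℝ) (hρ : 0 < ρ) (hspec : ∀ μ : ℂ, (A.map Complex.ofReal - μ • 1).det = 0 →
      ‖μ‖ ≤ ρ)
    (x₀ : Fin N → ℝ) (hx₀ : ∀ i, 0 < x₀ i) (hPerron : A.mulVec x₀ = ρ • x₀)
    (α : ℝ) (hα0 : 0 ≤ α) (hα1 : α < 1) :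
    ∃ ε₀ > 0, ∀ ε : ℝ, 0 < ε → ε < ε₀ →
      let ω : ℝ := Real.sqrt (ε * (1 - ε))
      let β : ℝ := (1 + ε - α) / ρ
      let J : Matrix ((Fin N) ⊕ (Fin N)) ((Fin N) ⊕ (Fin N)) ℝ :=
        Matrix.fromBlocks (-((1 - α) • (1 : Matrix (Fin N) (Fin N) ℝ)) + β • A)
          (-(1 : Matrix (Fin N) (Fin N) ℝ))
          (ε • (1 : Matrix (Fin N) (Fin N) ℝ)) (-(ε • (1 : Matrix (Fin N) (Fin N) ℝ)))
      let e : ℝ → ℝ → ((Fin N) ⊕ (Fin N)) → ℝ := fun r s =>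
        Sum.elim (fun i => r * x₀ i) (fun i => (ε * r + ω * s) * x₀ i)
      (∀ r s : ℝ, ∃ r' s' : ℝ, J.mulVec (e r s) = e r' s')
      ∧ J.mulVec (e 1 0) = ω • (e 0 1)
      ∧ J.mulVec (e 0 1) = -(ω • (e 1 0))
      ∧ ∀ lam : ℂ,
          ((J.map Complex.ofReal)
            - lam • (1 : Matrix ((Fin N) ⊕ (Fin N)) ((Fin N) ⊕ (Fin N)) ℂ)).det = 0 →
          lam ≠ Complex.I * (ω : ℂ) → lam ≠ -(Complex.I * (ω : ℂ)) →
          lam.re < 0 :=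
  stmt_16_general N A ρ hρ hspec x₀ hPerron α hα1
end

section
/- Let μ ∈ ℂ with Re(μ) ≥ 0 and α < 1, and consider the quadratic λ² + (μ + 1 + ε - α)λ + ε(μ + 2 - α) = 0 in λ. At ε = 0 the roots are λ = 0 and λ = α - 1 - μ (which has negative real part). Moreover, writing the root branch λ(ε) with λ(0) = 0, one has dRe(λ)/dε |_{ε=0} = -Re((2 - α + μ)/(1 - α + μ)) < 0; hence the zero root moves into the open left half-plane for small ε > 0. -/
open Complex

/-!
At `ε = 0` the quadratic factors as `λ (λ + 1 - α + μ)`. Differentiating the identity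
`λ(ε)² + (a + ε) λ(ε) + ε c = 0` at `ε = 0`, where `λ(0) = 0`, leaves `a λ'(0) + c = 0` with
`a = 1 - α + μ` and `c = a + 1`, so `λ'(0) = -(a + 1) / a`. Since `Re a > 0`, also
`Re a⁻¹ > 0`, whence `Re ((a + 1) / a) = 1 + Re a⁻¹ > 0`.
-/

lemma sq_add_mul_eq_zero_iff {R : Type*} [CommRing R] [NoZeroDivisors R] (x b : R) :
    x ^ 2 + b * x = 0 ↔ x = 0 ∨ x = -b := by
  rw [show x ^ 2 + b * x = x * (x + b) by ring, mul_eq_zero, add_eq_zero_iff_eq_neg]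

lemma Complex.re_add_one_div_pos {z : ℂ} (hz : 0 < z.re) : 0 < ((z + 1) / z).re := by
  have hz0 : z ≠ 0 := fun h => by simp [h] at hz
  rw [add_div, div_self hz0, one_div, add_re, one_re, inv_re]
  have : 0 < normSq z := normSq_pos.mpr hz0
  positivity

lemma hasDerivAt_zero_of_root_branch {a c : ℂ} (ha : a ≠ 0) {lam : ℝ → ℂ}
    (hroot : ∀ ε : ℝ, lam ε ^ 2 + (a + ε) * lam ε + ε * c = 0) (h0 : lam 0 = 0)
    (hdiff : DifferentiableAt ℝ lam 0) : HasDerivAt lam (-(c / a)) 0 := by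
  set d := deriv lam 0
  have hlam : HasDerivAt lam d 0 := hdiff.hasDerivAt
  have hε : HasDerivAt (fun ε : ℝ => (ε : ℂ)) 1 0 := (hasDerivAt_id (0 : ℝ)).ofReal_comp
  have hF : HasDerivAt (fun ε : ℝ => lam ε * lam ε + (a + ε) * lam ε + ε * c)
      (d * lam 0 + lam 0 * d + (1 * lam 0 + (a + ((0 : ℝ) : ℂ)) * d) + 1 * c) 0 :=
    ((hlam.mul hlam).add ((hε.const_add a).mul hlam)).add (hε.mul_const c)
  have hF_zero : (fun ε : ℝ => lam ε * lam ε + (a + ε) * lam ε + ε * c) = fun _ => 0 :=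
    funext fun ε => by linear_combination hroot ε
  rw [hF_zero, h0] at hF
  have hlin : a * d + c = 0 := by
    simpa using (hF.unique (hasDerivAt_const (0 : ℝ) (0 : ℂ)))
  convert hlam using 1
  field_simp
  linear_combination -hlin

/-- Perturbation of the zero root: for `Re μ ≥ 0`, `α < 1`, at `ε = 0` the
roots of `λ² + (μ+1+ε-α)λ + ε(μ+2-α) = 0` are `0` and `α-1-μ` (the latter with
negative real part), and along any differentiable root branch `λ(ε)` with
`λ(0) = 0` one has `d Re λ / d ε |₀ = -Re((2-α+μ)/(1-α+μ)) < 0`. -/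
theorem stmt_18 (μ : ℂ) (hμ : 0 ≤ μ.re) (α : ℝ) (hα : α < 1) :
    (∀ lam : ℂ,
      lam ^ 2 + (μ + 1 + (0 : ℂ) - (α : ℂ)) * lam + (0 : ℂ) * (μ + 2 - (α : ℂ)) = 0 ↔
        (lam = 0 ∨ lam = (α : ℂ) - 1 - μ))
    ∧ ((α : ℂ) - 1 - μ).re < 0
    ∧ (-(((2 - (α : ℂ) + μ) / (1 - (α : ℂ) + μ)).re) < 0)
    ∧ ∀ lam : ℝ → ℂ,
        (∀ ε : ℝ, (lam ε) ^ 2 + (μ + 1 + (ε : ℂ) - (α : ℂ)) * (lam ε)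
            + (ε : ℂ) * (μ + 2 - (α : ℂ)) = 0) →
        lam 0 = 0 → DifferentiableAt ℝ lam 0 →
        HasDerivAt (fun ε : ℝ => (lam ε).re)
          (-(((2 - (α : ℂ) + μ) / (1 - (α : ℂ) + μ)).re)) 0 := by
  set a : ℂ := 1 - α + μ
  have ha : 0 < a.re := by simp [a]; linarith
  have ha0 : a ≠ 0 := fun h => by simp [h] at ha
  have hc : (2 - α + μ : ℂ) = a + 1 := by ring
  refine ⟨fun lam => ?_, by simp; linarith, ?_, fun lam hroot h0 hdiff => ?_⟩
  · calc _ ↔ lam ^ 2 + a * lam = 0 := by constructor <;> intro h <;> linear_combination h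
      _ ↔ _ := by rw [sq_add_mul_eq_zero_iff, show -a = (α : ℂ) - 1 - μ by ring]
  · simpa [hc] using re_add_one_div_pos ha
  · have hlam := hasDerivAt_zero_of_root_branch (c := a + 1) ha0
      (fun ε => by linear_combination hroot ε) h0 hdiff
    rw [hc, ← neg_re]
    exact reCLM.hasFDerivAt.comp_hasDerivAt 0 hlam
end
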